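/- In an additive transition system, the relation of substitutability on states is transitive: if q₁ is substitutable with q₂ and q₂ is substitutable with q₃, then q₁ is substitutable with q₃. -/

import Mathlib

/-- Reachability: reflexive-transitive closure of the step relation. -/
def Reaches {Q : Type*} (step : (Q → ℕ) → (Q → ℕ) → Prop) : (Q → ℕ) → (Q → ℕ) → Prop :=
  Relation.ReflTransGen step

/-- States q₁ and q₂ are n-substitutable: there is an input x and a
configuration b such that both n·q₁ + b and n·q₂ + b are reachable from I(x). -/
def NSubstitutable {Q Sg : Type*} [DecidableEq Q]
    (step : (Q → ℕ) → (Q → ℕ) → Prop) (I : (Sg → ℕ) → (Q → ℕ))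
    (n : ℕ) (q₁ q₂ : Q) : Prop :=
  ∃ (x : Sg → ℕ) (b : Q → ℕ), x ≠ 0 ∧
    Reaches step (I x) (Pi.single q₁ n + b) ∧
    Reaches step (I x) (Pi.single q₂ n + b)

/-- States are substitutable if they are n-substitutable for some n ≥ 1. -/
def Substitutable {Q Sg : Type*} [DecidableEq Q]
    (step : (Q → ℕ) → (Q → ℕ) → Prop) (I : (Sg → ℕ) → (Q → ℕ))
    (q₁ q₂ : Q) : Prop :=
  ∃ n, 0 < n ∧ NSubstitutable step I n q₁ q₂

/-!
Two `n`-substitutions can be run side by side from the sum of their inputs: if `n·q₁ + b` and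
`n·q₂ + b` are reachable from `I x`, and `n·q₂ + c` and `n·q₃ + c` from `I y`, then
`n·q₁ + (b + n·q₂ + c)` and `n·q₃ + (b + n·q₂ + c)` are both reachable from `I (x + y)`.
Substitutions with different multiplicities `n₁`, `n₂` are first scaled to the common
multiplicity `n₁ * n₂` by running `m` copies in parallel.
-/

section Reaches

variable {Q : Type*} {step : (Q → ℕ) → (Q → ℕ) → Prop}
  (hadd : ∀ c c' d : Q → ℕ, step c c' → step (c + d) (c' + d))
include hadd

theorem Reaches.add_right {c c' : Q → ℕ} (h : Reaches step c c') (d : Q → ℕ) :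
    Reaches step (c + d) (c' + d) := by
  induction h with
  | refl => exact .refl
  | tail _ hs ih => exact ih.tail (hadd _ _ d hs)

theorem Reaches.add {c c' d d' : Q → ℕ} (hc : Reaches step c c') (hd : Reaches step d d') :
    Reaches step (c + d) (c' + d') := by
  have hd' : Reaches step (d + c') (d' + c') := Reaches.add_right hadd hd c'
  rw [add_comm d, add_comm d'] at hd'
  exact (Reaches.add_right hadd hc d).trans hd'

theorem Reaches.nsmul {c c' : Q → ℕ} (h : Reaches step c c') (m : ℕ) :
    Reaches step (m • c) (m • c') := by
  induction m with
  | zero => rw [zero_smul, zero_smul]; exact .refl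
  | succ k ih => simpa only [succ_nsmul] using Reaches.add hadd ih h

end Reaches

def AddMonoidHom.ofMapAdd {M N : Type*} [AddZeroClass M] [AddCancelMonoid N] (f : M → N)
    (hf : ∀ x y, f (x + y) = f x + f y) : M →+ N where
  toFun := f
  map_zero' := by simpa using (hf 0 0).symm
  map_add' := hf

section NSubstitutable

variable {Q Sg : Type*} [DecidableEq Q] {step : (Q → ℕ) → (Q → ℕ) → Prop}
  {I : (Sg → ℕ) → (Q → ℕ)}
  (hadd : ∀ c c' d : Q → ℕ, step c c' → step (c + d) (c' + d))
  (hI : ∀ x y : Sg → ℕ, I (x + y) = I x + I y)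
include hadd hI

theorem NSubstitutable.mul {n m : ℕ} {q q' : Q} (h : NSubstitutable step I n q q')
    (hm : 0 < m) : NSubstitutable step I (m * n) q q' := by
  obtain ⟨x, b, hx, hq, hq'⟩ := h
  have hIm : I (m • x) = m • I x := map_nsmul (AddMonoidHom.ofMapAdd I hI) m x
  have hsingle (p : Q) : Pi.single p (m * n) + m • b = m • (Pi.single p n + b) := by
    rw [smul_add, ← Pi.single_smul, smul_eq_mul]
  refine ⟨m • x, m • b, smul_ne_zero hm.ne' hx, ?_, ?_⟩
  · rw [hIm, hsingle]; exact Reaches.nsmul hadd hq m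
  · rw [hIm, hsingle]; exact Reaches.nsmul hadd hq' m

theorem NSubstitutable.trans {n : ℕ} {q₁ q₂ q₃ : Q} (h12 : NSubstitutable step I n q₁ q₂)
    (h23 : NSubstitutable step I n q₂ q₃) : NSubstitutable step I n q₁ q₃ := by
  obtain ⟨x, b, hx, h1, h2⟩ := h12
  obtain ⟨y, c, -, h2', h3⟩ := h23
  refine ⟨x + y, b + (Pi.single q₂ n + c), fun hxy => hx (add_eq_zero.mp hxy).1, ?_, ?_⟩
  · rw [hI]
    convert Reaches.add hadd h1 h2' using 1
    abel
  · rw [hI]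
    convert Reaches.add hadd h2 h3 using 1
    abel

end NSubstitutable

theorem substitutable_trans_general {Q Sg : Type*} [DecidableEq Q]
    (step : (Q → ℕ) → (Q → ℕ) → Prop)
    (hadd : ∀ c c' d : Q → ℕ, step c c' → step (c + d) (c' + d))
    (I : (Sg → ℕ) → (Q → ℕ))
    (hI : ∀ x y : Sg → ℕ, I (x + y) = I x + I y)
    (q₁ q₂ q₃ : Q)
    (h12 : Substitutable step I q₁ q₂) (h23 : Substitutable step I q₂ q₃) :
    Substitutable step I q₁ q₃ := by
  obtain ⟨n₁, hn₁, h12⟩ := h12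
  obtain ⟨n₂, hn₂, h23⟩ := h23
  have h12' : NSubstitutable step I (n₁ * n₂) q₁ q₂ := mul_comm n₂ n₁ ▸ h12.mul hadd hI hn₂
  have h23' : NSubstitutable step I (n₁ * n₂) q₂ q₃ := h23.mul hadd hI hn₁
  exact ⟨n₁ * n₂, Nat.mul_pos hn₁ hn₂, h12'.trans hadd hI h23'⟩

/-- Substitutability is transitive in an additive transition system with an
additive input map. -/
theorem substitutable_trans {Q Sg : Type*} [Fintype Q] [DecidableEq Q]
    (step : (Q → ℕ) → (Q → ℕ) → Prop)
    (hadd : ∀ c c' d : Q → ℕ, step c c' → step (c + d) (c' + d))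
    (I : (Sg → ℕ) → (Q → ℕ))
    (hI : ∀ x y : Sg → ℕ, I (x + y) = I x + I y)
    (q₁ q₂ q₃ : Q)
    (h12 : Substitutable step I q₁ q₂) (h23 : Substitutable step I q₂ q₃) :
    Substitutable step I q₁ q₃ :=
  substitutable_trans_general step hadd I hI q₁ q₂ q₃ h12 h23
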